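/- arXiv:2201.06394 — 4 statements merged into one kernel-verified Lean document; each statement's English description precedes it below -/
import Mathlib

section
/- (Monomial prediction) Let f_i : 𝔽₂^{n_i} → 𝔽₂^{n_{i+1}}, 0 ≤ i ≤ r-2, be vectorial Boolean functions, and fix u_0 ∈ 𝔽₂^{n_0} and u_{r-1} ∈ 𝔽₂^{n_{r-1}}. Then the ANF of the composite Boolean function x ↦ π_{u_{r-1}}(f_{r-2} ∘ ⋯ ∘ f_0(x)) has coefficient 1 on the monomial x^{u_0} if and only if the number of monomial trails |π_{u_0}(x_0) ⋈ π_{u_{r-1}}(x_{r-1})| is odd. -/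
open Finset

section Core

variable {α : Type*}

/-- The monomial `x^u` over `𝔽₂`. -/
def monom [Fintype α] (u x : α → ZMod 2) : ZMod 2 :=
  ∏ i, if u i = 1 then x i else 1

/-- The ANF coefficient of the monomial `x^u` in `f`, via Möbius inversion. -/
def anf [Fintype α] [DecidableEq α] (f : (α → ZMod 2) → ZMod 2) (u : α → ZMod 2) : ZMod 2 :=
  ∑ v ∈ Finset.univ.filter (fun v : α → ZMod 2 => ∀ i, v i = 1 → u i = 1), f v

/-- Hamming weight. -/
def wt [Fintype α] (u : α → ZMod 2) : ℕ :=
  (Finset.univ.filter (fun i => u i = 1)).card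

/-- Algebraic degree, in `ℤ ∪ {-∞}`. -/
def deg [Fintype α] [DecidableEq α] (f : (α → ZMod 2) → ZMod 2) : WithBot ℤ :=
  (Finset.univ.filter (fun u : α → ZMod 2 => anf f u = 1)).sup
    (fun u => ((wt u : ℤ) : WithBot ℤ))

/-- Combine an assignment on `I` with one on `Iᶜ` to a full assignment. -/
def combine [Fintype α] [DecidableEq α] (I : Finset α) (w : ↥I → ZMod 2)
    (y : ↥Iᶜ → ZMod 2) : α → ZMod 2 :=
  fun i => if h : i ∈ I then w ⟨i, h⟩ else y ⟨i, Finset.mem_compl.mpr h⟩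

/-- The coefficient function `g_{f,w}` of `x_I^w` in `f`, a Boolean function of `x_{Iᶜ}`. -/
def coeffFun [Fintype α] [DecidableEq α] (f : (α → ZMod 2) → ZMod 2) (I : Finset α)
    (w : ↥I → ZMod 2) : (↥Iᶜ → ZMod 2) → ZMod 2 :=
  fun y => ∑ t : ↥Iᶜ → ZMod 2, anf f (combine I w t) * monom t y

/-- The vector degree of `f` w.r.t. the index set `I`. -/
def vdeg [Fintype α] [DecidableEq α] (f : (α → ZMod 2) → ZMod 2) (I : Finset α)
    (w : ↥I → ZMod 2) : WithBot ℤ :=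
  deg (coeffFun f I w)

/-- `f` with the variables outside `S` set to `0`. -/
def restrict0 [Fintype α] [DecidableEq α] (f : (α → ZMod 2) → ZMod 2) (S : Finset α) :
    (α → ZMod 2) → ZMod 2 :=
  fun x => f (fun i => if i ∈ S then x i else 0)

/-- Combine an assignment on `I₁` with one on `I₂ \ I₁` to an assignment on `I₂`. -/
def joinFn [DecidableEq α] {I₁ I₂ : Finset α} (w : ↥I₁ → ZMod 2)
    (w' : ↥(I₂ \ I₁) → ZMod 2) : ↥I₂ → ZMod 2 :=
  fun j => if h : (j : α) ∈ I₁ then w ⟨(j : α), h⟩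
           else w' ⟨(j : α), Finset.mem_sdiff.mpr ⟨j.2, h⟩⟩

end Core

/-- Coordinatewise OR of the family `W i`, over indices `i` with `u i = 1`. -/
def orFam {n : ℕ} {β : Type*} (u : Fin n → ZMod 2) (W : Fin n → β → ZMod 2) :
    β → ZMod 2 :=
  fun j => if ∃ i, u i = 1 ∧ W i j = 1 then 1 else 0

/-- The vector numeric mapping `VDEG_d(f, V)`. -/
def VDEG {n : ℕ} {δ : Type*} [Fintype δ] [DecidableEq δ]
    (f : (Fin n → ZMod 2) → ZMod 2) (V : Fin n → (δ → ZMod 2) → WithBot ℤ)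
    (w : δ → ZMod 2) : WithBot ℤ :=
  (Finset.univ.filter (fun p : (Fin n → ZMod 2) × (Fin n → δ → ZMod 2) =>
      anf f p.1 = 1 ∧ (∀ i, p.1 i = 0 → p.2 i = 0) ∧ w = orFam p.1 p.2)).sup
    (fun p => ∑ i ∈ Finset.univ.filter (fun i => p.1 i = 1), V i (p.2 i))

/-- Monomial transition `π_u(x) → π_v(g(x))`. -/
def MonTrans {a b : ℕ} (g : (Fin a → ZMod 2) → (Fin b → ZMod 2))
    (u : Fin a → ZMod 2) (v : Fin b → ZMod 2) : Prop :=
  anf (fun x => monom v (g x)) u = 1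

/-- Monomial trails from level `a` to level `b`, with fixed endpoints `u`, `v`
(trails are normalized to be `0` outside the levels `a, …, b`). -/
def Trails (n : ℕ → ℕ) (f : ∀ i, (Fin (n i) → ZMod 2) → (Fin (n (i + 1)) → ZMod 2))
    (a b : ℕ) (u : Fin (n a) → ZMod 2) (v : Fin (n b) → ZMod 2) :
    Set (∀ i, Fin (n i) → ZMod 2) :=
  {t | t a = u ∧ t b = v ∧ (∀ i, a ≤ i → i < b → MonTrans (f i) (t i) (t (i + 1))) ∧
       (∀ i, i < a → t i = fun _ => 0) ∧ (∀ i, b < i → t i = fun _ => 0)}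

/-- The iterated composition `f_{b-1} ∘ ⋯ ∘ f_a` (meaningful for `a ≤ b`). -/
def iterComp (n : ℕ → ℕ) (f : ∀ i, (Fin (n i) → ZMod 2) → (Fin (n (i + 1)) → ZMod 2))
    (a : ℕ) : (b : ℕ) → (Fin (n a) → ZMod 2) → (Fin (n b) → ZMod 2)
  | 0 => fun x j => if h : a = 0 then x (Fin.cast (show n 0 = n a by rw [h]) j) else 0
  | b + 1 =>
      if h : a = b + 1 then fun x j => x (Fin.cast (show n (b + 1) = n a by rw [h]) j)
      else fun x => f b (iterComp n f a b x)

section Iterated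

/-- Embed an index set `J ⊆ {0,…,n-1}` into the joint index set of size `n' 0 = n + m`. -/
def liftJ {n m N0 : ℕ} (h0 : N0 = n + m) (J : Finset (Fin n)) : Finset (Fin N0) :=
  J.image (fun (j : Fin n) => (⟨j.val, by have := j.isLt; omega⟩ : Fin N0))

/-- Set the `x`-variables outside `S` to zero in a joint assignment. -/
def mask0 {n m N0 : ℕ} (h0 : N0 = n + m) (S : Finset (Fin n)) (z : Fin N0 → ZMod 2) :
    Fin N0 → ZMod 2 :=
  fun i => if h : (i : ℕ) < n then (if (⟨(i : ℕ), h⟩ : Fin n) ∈ S then z i else 0) else z i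

/-- The iterated estimated vector degrees `V_t^S`. -/
def Vt {n m : ℕ} (n' : ℕ → ℕ) (h0 : n' 0 = n + m)
    (f : ∀ t, (Fin (n' t) → ZMod 2) → (Fin (n' (t + 1)) → ZMod 2))
    (J S : Finset (Fin n)) :
    (t : ℕ) → Fin (n' (t + 1)) → (↥(liftJ h0 J) → ZMod 2) → WithBot ℤ
  | 0 => fun i => vdeg (fun z => f 0 (mask0 h0 S z) i) (liftJ h0 J)
  | t + 1 => fun i => VDEG (fun y => f (t + 1) y i) (Vt n' h0 f J S t)

/-- The estimated vector degree `vdeg-hat^S` (here `r = s + 2`). -/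
def vdegHat {n m : ℕ} (n' : ℕ → ℕ) (h0 : n' 0 = n + m)
    (f : ∀ t, (Fin (n' t) → ZMod 2) → (Fin (n' (t + 1)) → ZMod 2))
    (J : Finset (Fin n)) (s : ℕ) (S : Finset (Fin n)) :
    (↥(liftJ h0 J) → ZMod 2) → WithBot ℤ :=
  VDEG (fun y => monom (fun _ => 1) (f (s + 1) y)) (Vt n' h0 f J S s)

/-- The estimated degree `deg-hat^S`. -/
noncomputable def degHat {n m : ℕ} (n' : ℕ → ℕ) (h0 : n' 0 = n + m)
    (f : ∀ t, (Fin (n' t) → ZMod 2) → (Fin (n' (t + 1)) → ZMod 2))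
    (J : Finset (Fin n)) (s : ℕ) (S : Finset (Fin n)) : WithBot ℤ :=
  Finset.univ.sup (fun w : ↥(liftJ h0 J) → ZMod 2 =>
    vdegHat n' h0 f J s S w + ((wt w : ℤ) : WithBot ℤ))

end Iterated


-- ===== auxiliary lemmas for monomial_prediction =====

section MPaux
variable {α β : Type*} [Fintype α] [DecidableEq α]

lemma zmod2_cases (a : ZMod 2) : a = 0 ∨ a = 1 := by revert a; decide

lemma monom_eq_ite (u x : α → ZMod 2) :
    monom u x = if (∀ i, u i = 1 → x i = 1) then 1 else 0 := by
  unfold monom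
  split_ifs with h
  · exact Finset.prod_eq_one fun i _ => by
      by_cases hu : u i = 1 <;> simp [hu, h i]
  · push_neg at h
    obtain ⟨i, hu, hx⟩ := h
    have hx0 : x i = 0 := (zmod2_cases (x i)).resolve_right hx
    exact Finset.prod_eq_zero (Finset.mem_univ i) (by simp [hu, hx0])

lemma card_interval (v x : α → ZMod 2) :
    (((Finset.univ.filter (fun w : α → ZMod 2 =>
        (∀ i, w i = 1 → x i = 1) ∧ (∀ i, v i = 1 → w i = 1))).card : ZMod 2))
      = if v = x then 1 else 0 := by
  classical
  have hset : Finset.univ.filter (fun w : α → ZMod 2 =>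
      (∀ i, w i = 1 → x i = 1) ∧ (∀ i, v i = 1 → w i = 1)) =
      Fintype.piFinset (fun i => if v i = 1 then (if x i = 1 then {1} else ∅)
        else (if x i = 1 then Finset.univ else {0})) := by
    ext w
    simp only [Finset.mem_filter, Finset.mem_univ, true_and, Fintype.mem_piFinset]
    constructor
    · rintro ⟨h2, h1⟩ i
      by_cases hv : v i = 1 <;> by_cases hx : x i = 1 <;> simp [hv, hx]
      · exact h1 i hv
      · exact hx (h2 i (h1 i hv))
      · exact (zmod2_cases (w i)).resolve_right (fun hw => hx (h2 i hw))
    · intro h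
      constructor <;> intro i hi
      · have := h i
        by_cases hv : v i = 1 <;> by_cases hx : x i = 1 <;> simp_all
      · have := h i
        by_cases hx : x i = 1 <;> simp_all
  rw [hset, Fintype.card_piFinset, Nat.cast_prod]
  by_cases hvx : v = x
  · subst hvx
    rw [if_pos rfl]
    apply Finset.prod_eq_one
    intro i _
    by_cases h : v i = 1 <;> simp [h]
  · rw [if_neg hvx]
    obtain ⟨i, hi⟩ := Function.ne_iff.mp hvx
    apply Finset.prod_eq_zero (Finset.mem_univ i)
    rcases zmod2_cases (v i) with h1 | h1 <;> rcases zmod2_cases (x i) with h2 | h2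
    · exact absurd (h1.trans h2.symm) hi
    · simp [h1, h2]
      decide
    · simp [h1, h2]
    · exact absurd (h1.trans h2.symm) hi

lemma anf_anf (F : (α → ZMod 2) → ZMod 2) (x : α → ZMod 2) :
    anf (anf F) x = F x := by
  calc anf (anf F) x
      = ∑ w ∈ Finset.univ.filter (fun w : α → ZMod 2 => ∀ i, w i = 1 → x i = 1),
          ∑ v ∈ Finset.univ, if (∀ i, v i = 1 → w i = 1) then F v else 0 := by
        unfold anf
        exact Finset.sum_congr rfl fun w _ => Finset.sum_filter _ _
    _ = ∑ v ∈ Finset.univ, ∑ w ∈ Finset.univ.filter (fun w : α → ZMod 2 => ∀ i, w i = 1 → x i = 1),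
          if (∀ i, v i = 1 → w i = 1) then F v else 0 := Finset.sum_comm
    _ = ∑ v ∈ Finset.univ, (if v = x then (1 : ZMod 2) else 0) * F v := by
        refine Finset.sum_congr rfl fun v _ => ?_
        have h : ∀ w : α → ZMod 2, (if (∀ i, v i = 1 → w i = 1) then F v else 0)
            = (if (∀ i, v i = 1 → w i = 1) then (1:ZMod 2) else 0) * F v := fun w => by
          split <;> simp
        simp only [h]
        rw [← Finset.sum_mul, Finset.sum_boole, Finset.filter_filter, card_interval]
    _ = F x := by simp [ite_mul]

lemma anf_expand (F : (α → ZMod 2) → ZMod 2) (x : α → ZMod 2) :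
    F x = ∑ w : α → ZMod 2, anf F w * monom w x := by
  conv_lhs => rw [← anf_anf F x]
  rw [show anf (anf F) x = ∑ v ∈ Finset.univ.filter
      (fun v : α → ZMod 2 => ∀ i, v i = 1 → x i = 1), anf F v from rfl]
  rw [Finset.sum_filter]
  refine Finset.sum_congr rfl fun w _ => ?_
  rw [monom_eq_ite]
  by_cases h : ∀ i, w i = 1 → x i = 1 <;> simp [h]

lemma anf_sum {γ : Type*} (s : Finset γ) (g : γ → (α → ZMod 2) → ZMod 2) (u : α → ZMod 2) :
    anf (fun x => ∑ w ∈ s, g w x) u = ∑ w ∈ s, anf (g w) u := by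
  unfold anf; exact Finset.sum_comm

lemma anf_const_mul (c : ZMod 2) (g : (α → ZMod 2) → ZMod 2) (u : α → ZMod 2) :
    anf (fun x => c * g x) u = c * anf g u := by
  unfold anf; rw [Finset.mul_sum]

lemma anf_comp [Fintype β] [DecidableEq β] (g : (α → ZMod 2) → (β → ZMod 2))
    (F : (β → ZMod 2) → ZMod 2) (u : α → ZMod 2) :
    anf (fun x => F (g x)) u
      = ∑ w : β → ZMod 2, anf F w * anf (fun x => monom w (g x)) u := by
  have h1 : (fun x => F (g x))
      = fun x => ∑ w : β → ZMod 2, anf F w * monom w (g x) :=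
    funext fun x => anf_expand F (g x)
  rw [h1, anf_sum]
  exact Finset.sum_congr rfl fun w _ => anf_const_mul _ _ _

lemma anf_monom (v u : α → ZMod 2) :
    anf (fun x => monom v x) u = if v = u then 1 else 0 := by
  unfold anf
  calc (∑ w ∈ Finset.univ.filter (fun w : α → ZMod 2 => ∀ i, w i = 1 → u i = 1), monom v w)
      = ∑ w ∈ Finset.univ.filter (fun w : α → ZMod 2 => ∀ i, w i = 1 → u i = 1),
          if (∀ i, v i = 1 → w i = 1) then (1:ZMod 2) else 0 :=
        Finset.sum_congr rfl fun w _ => monom_eq_ite v w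
    _ = if v = u then 1 else 0 := by
        rw [Finset.sum_boole, Finset.filter_filter, card_interval]

end MPaux

section MPtrails
variable (n : ℕ → ℕ) (f : ∀ i, (Fin (n i) → ZMod 2) → (Fin (n (i + 1)) → ZMod 2))


lemma trails_finite (a b : ℕ) (u : Fin (n a) → ZMod 2) (v : Fin (n b) → ZMod 2) :
    (Trails n f a b u v).Finite := by
  apply Set.Finite.of_finite_image (f := fun t (i : Fin (b + 1)) => t i.1)
  · exact Set.toFinite _
  · intro t1 h1 t2 h2 he
    funext i
    rcases lt_or_ge b i with hb | hb
    · rw [h1.2.2.2.2 i hb, h2.2.2.2.2 i hb]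
    · exact congrFun he ⟨i, Nat.lt_succ_of_le hb⟩

lemma trails_zero (u v : Fin (n 0) → ZMod 2) :
    (Nat.card (Trails n f 0 0 u v) : ZMod 2) = if v = u then 1 else 0 := by
  by_cases h : u = v
  · subst h
    have hs : Trails n f 0 0 u u
        = {Function.update (fun i => (fun _ => 0 : Fin (n i) → ZMod 2)) 0 u} := by
      ext t
      simp only [Trails, Set.mem_setOf_eq, Set.mem_singleton_iff]
      constructor
      · rintro ⟨h1, -, -, -, h5⟩
        funext i
        rcases Nat.eq_zero_or_pos i with hi | hi
        · subst hi; rw [h1, Function.update_self]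
        · rw [h5 i hi, Function.update_of_ne (by omega)]
      · rintro rfl
        exact ⟨Function.update_self _ _ _, Function.update_self _ _ _,
          fun i _ h2 => absurd h2 (by omega), fun i hi => absurd hi (by omega),
          fun i hi => Function.update_of_ne (by omega) _ _⟩
    rw [hs]
    simp
  · have hs : Trails n f 0 0 u v = ∅ := by
      ext t
      simp only [Trails, Set.mem_setOf_eq, Set.mem_empty_iff_false, iff_false]
      rintro ⟨h1, h2, -⟩
      exact h (h1.symm.trans h2)
    rw [hs]
    have hvu : v ≠ u := fun hvu => h hvu.symm
    simp [hvu]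

open Classical in
lemma trails_succ_card (b : ℕ) (u₀ : Fin (n 0) → ZMod 2) (v : Fin (n (b + 1)) → ZMod 2) :
    Nat.card (Trails n f 0 (b + 1) u₀ v)
      = ∑ w : Fin (n b) → ZMod 2,
          if MonTrans (f b) w v then Nat.card (Trails n f 0 b u₀ w) else 0 := by
  classical
  set p : (Fin (n b) → ZMod 2) → (∀ i, Fin (n i) → ZMod 2) → Prop :=
    fun w t => t ∈ Trails n f 0 b u₀ w ∧ MonTrans (f b) w v with hp
  have hΦ : ∀ t : ∀ i, Fin (n i) → ZMod 2, t ∈ Trails n f 0 (b + 1) u₀ v →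
      p (t b) (Function.update t (b + 1) (fun _ => 0)) := by
    rintro t ⟨h1, h2, h3, -, h5⟩
    have hmt : MonTrans (f b) (t b) v := h2 ▸ h3 b (Nat.zero_le b) (lt_add_one b)
    refine ⟨⟨?_, ?_, ?_, fun i hi => absurd hi (by omega), ?_⟩, hmt⟩
    · rw [Function.update_of_ne (by omega)]; exact h1
    · rw [Function.update_of_ne (by omega)]
    · intro i _ hib
      rw [Function.update_of_ne (show i ≠ b + 1 by omega),
        Function.update_of_ne (show i + 1 ≠ b + 1 by omega)]
      exact h3 i (Nat.zero_le i) (by omega)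
    · intro i hi
      rcases eq_or_ne i (b + 1) with rfl | hne
      · exact Function.update_self _ _ _
      · rw [Function.update_of_ne hne]; exact h5 i (by omega)
  let Φ : Trails n f 0 (b + 1) u₀ v → Σ w : Fin (n b) → ZMod 2, Subtype (p w) :=
    fun t => ⟨t.1 b, ⟨Function.update t.1 (b + 1) (fun _ => 0), hΦ t.1 t.2⟩⟩
  have hbij : Function.Bijective Φ := by
    constructor
    · intro t1 t2 h
      have hv1 : t1.1 (b + 1) = v := t1.2.2.1
      have hv2 : t2.1 (b + 1) = v := t2.2.2.1
      have hval : Function.update t1.1 (b + 1) (fun _ => 0)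
          = Function.update t2.1 (b + 1) (fun _ => 0) :=
        congrArg (fun q : Σ w : Fin (n b) → ZMod 2, Subtype (p w) => q.2.1) h
      refine Subtype.ext (funext fun i => ?_)
      rcases eq_or_ne i (b + 1) with rfl | hne
      · rw [hv1, hv2]
      · have := congrFun hval i
        rwa [Function.update_of_ne hne, Function.update_of_ne hne] at this
    · rintro ⟨w, t, ⟨⟨h1, h2, h3, -, h5⟩, hm⟩⟩
      have ht1 : t (b + 1) = fun _ => 0 := h5 (b + 1) (lt_add_one b)
      refine ⟨⟨Function.update t (b + 1) v, ?_, ?_, ?_, fun i hi => absurd hi (by omega), ?_⟩, ?_⟩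
      · rw [Function.update_of_ne (by omega)]; exact h1
      · exact Function.update_self _ _ _
      · intro i _ hib
        rcases eq_or_ne i b with rfl | hne
        · rw [Function.update_of_ne (show i ≠ i + 1 by omega), Function.update_self, h2]
          exact hm
        · rw [Function.update_of_ne (show i ≠ b + 1 by omega),
            Function.update_of_ne (show i + 1 ≠ b + 1 by omega)]
          exact h3 i (Nat.zero_le i) (by omega)
      · intro i hi
        rw [Function.update_of_ne (by omega)]
        exact h5 i (by omega)
      · apply Sigma.subtype_ext
        · show Function.update t (b + 1) v b = w
          rw [Function.update_of_ne (by omega)]; exact h2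
        · show Function.update (Function.update t (b + 1) v) (b + 1) (fun _ => 0) = t
          funext i
          rcases eq_or_ne i (b + 1) with rfl | hne
          · rw [Function.update_self, ht1]
          · rw [Function.update_of_ne hne, Function.update_of_ne hne]
  rw [Nat.card_congr (Equiv.ofBijective Φ hbij)]
  haveI hfin : ∀ w : Fin (n b) → ZMod 2, Finite (Subtype (p w)) := fun w => by
    exact ((trails_finite n f 0 b u₀ w).subset (fun t ht => ht.1)).to_subtype
  haveI : ∀ w : Fin (n b) → ZMod 2, Fintype (Subtype (p w)) := fun w => Fintype.ofFinite _
  rw [Nat.card_eq_fintype_card, Fintype.card_sigma]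
  refine Finset.sum_congr rfl fun w _ => ?_
  by_cases hm : MonTrans (f b) w v
  · rw [if_pos hm, ← Nat.card_eq_fintype_card]
    exact Nat.card_congr (Equiv.subtypeEquivRight (fun t => and_iff_left hm))
  · rw [if_neg hm]
    haveI : IsEmpty (Subtype (p w)) := ⟨fun t => hm t.2.2⟩
    exact Fintype.card_eq_zero

lemma mp_key (u₀ : Fin (n 0) → ZMod 2) :
    ∀ (b : ℕ) (v : Fin (n b) → ZMod 2),
      (Nat.card (Trails n f 0 b u₀ v) : ZMod 2)
        = anf (fun x => monom v (iterComp n f 0 b x)) u₀ := by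
  classical
  intro b
  induction b with
  | zero =>
    intro v
    rw [trails_zero]
    have hid : iterComp n f 0 0 = fun x => x := by
      funext x j
      simp [iterComp]
    simp only [hid]
    rw [anf_monom]
  | succ b ih =>
    intro v
    have hcomp : iterComp n f 0 (b + 1) = fun x => f b (iterComp n f 0 b x) := by
      simp only [iterComp]
      rw [dif_neg (by omega : ¬(0 : ℕ) = b + 1)]
    rw [trails_succ_card, Nat.cast_sum]
    simp only [hcomp]
    rw [anf_comp (iterComp n f 0 b) (fun y => monom v (f b y)) u₀]
    refine Finset.sum_congr rfl fun w _ => ?_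
    rw [← ih w]
    have hmt : anf (fun y => monom v (f b y)) w
        = if MonTrans (f b) w v then (1 : ZMod 2) else 0 := by
      unfold MonTrans
      rcases zmod2_cases (anf (fun y => monom v (f b y)) w) with h | h <;> simp [h]
    rw [hmt]
    by_cases hm : MonTrans (f b) w v <;> simp [hm]

end MPtrails

/-- **Monomial prediction.** The ANF of `x ↦ π_{u_{r-1}}(f_{r-2} ∘ ⋯ ∘ f_0(x))`
has coefficient `1` on `x^{u_0}` iff the number of monomial trails is odd. -/
theorem monomial_prediction (n : ℕ → ℕ)
    (f : ∀ i, (Fin (n i) → ZMod 2) → (Fin (n (i + 1)) → ZMod 2))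
    (r : ℕ) (hr : 1 ≤ r)
    (u₀ : Fin (n 0) → ZMod 2) (u : Fin (n (r - 1)) → ZMod 2) :
    anf (fun x => monom u (iterComp n f 0 (r - 1) x)) u₀ = 1 ↔
      Nat.card (Trails n f 0 (r - 1) u₀ u) % 2 = 1 := by
  rw [← mp_key n f u₀ (r - 1) u]
  rcases Nat.mod_two_eq_zero_or_one (Nat.card (Trails n f 0 (r - 1) u₀ u)) with h | h <;>
    rw [← ZMod.natCast_mod (Nat.card (Trails n f 0 (r - 1) u₀ u)) 2, h] <;> simp
end

section
/- Let f be a Boolean function on n variables and I₁ ⊆ I₂ ⊆ {0,…,n-1}. Then for every w ∈ 𝔽₂^{I₁}: vdeg_{I₁}(f)(w) = max_{w' ∈ 𝔽₂^{I₂∖I₁}} ( vdeg_{I₂}(f)(w ⊔ w') + wt(w') ), where w ⊔ w' ∈ 𝔽₂^{I₂} denotes the vector agreeing with w on I₁ and with w' on I₂ ∖ I₁, and the computation is in ℤ ∪ {-∞}. -/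
/-!
Splitting the exponent `t` of `x_{I₁ᶜ}` into its parts `w'` on `I₂ \ I₁` and `s` on `I₂ᶜ`
identifies the monomial `x_{I₁}^w x_{I₁ᶜ}^t` with `x_{I₂}^{w ⊔ w'} x_{I₂ᶜ}^s`, and
`wt t = wt w' + wt s`. Hence the maximum over `t` defining `vdeg_{I₁}(f)(w)` regroups, by `w'`,
into the maxima over `s` defining `vdeg_{I₂}(f)(w ⊔ w')`, each shifted by `wt w'`.
-/

open Finset

section Anf

variable {α : Type*} [Fintype α] [DecidableEq α]

lemma sum_monom_filter_le (t u : α → ZMod 2) :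
    ∑ v ∈ univ.filter (fun v : α → ZMod 2 => ∀ i, v i = 1 → u i = 1), monom t v
      = if t = u then 1 else 0 := by
  have hfilter : univ.filter (fun v : α → ZMod 2 => ∀ i, v i = 1 → u i = 1)
      = Fintype.piFinset (fun i => univ.filter (fun b : ZMod 2 => b = 1 → u i = 1)) := by
    ext v; simp
  -- the sum factors over the coordinates, and each factor `∑_{b ≼ u i} b^(t i)` is `[t i = u i]`
  have hcoord : ∀ a c : ZMod 2,
      ∑ b ∈ univ.filter (fun b : ZMod 2 => b = 1 → c = 1), (if a = 1 then b else 1)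
        = if a = c then 1 else 0 := by decide
  have hfactor := prod_univ_sum (fun i => univ.filter (fun b : ZMod 2 => b = 1 → u i = 1))
    (fun i b => if t i = 1 then b else 1)
  simp only [hcoord] at hfactor
  rw [hfilter]
  unfold monom
  rw [← hfactor, Fintype.prod_boole]
  exact if_congr funext_iff.symm rfl rfl

lemma anf_sum_mul_monom (c : (α → ZMod 2) → ZMod 2) (u : α → ZMod 2) :
    anf (fun y => ∑ t, c t * monom t y) u = c u := by
  simp only [anf, sum_comm (s := univ.filter _), ← mul_sum, sum_monom_filter_le, mul_ite,
    mul_one, mul_zero, sum_ite_eq', mem_univ, if_true]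

end Anf

section Weight

variable {β γ : Type*} [Fintype β] [Fintype γ]

lemma wt_comp_equiv (σ : β ≃ γ) (x : γ → ZMod 2) : wt (x ∘ σ) = wt x := by
  simp only [wt, card_filter]
  exact Fintype.sum_equiv σ _ _ fun _ => rfl

lemma wt_sumElim (a : β → ZMod 2) (b : γ → ZMod 2) : wt (Sum.elim a b) = wt a + wt b := by
  simp only [wt, card_filter, Fintype.sum_sum_type, Sum.elim_inl, Sum.elim_inr]
  rfl

end Weight

section VectorDegree

variable {α : Type*} [Fintype α] [DecidableEq α]

def monomDeg (f : (α → ZMod 2) → ZMod 2) (I : Finset α) (w : ↥I → ZMod 2)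
    (t : ↥Iᶜ → ZMod 2) : WithBot ℤ :=
  if anf f (combine I w t) = 1 then ((wt t : ℤ) : WithBot ℤ) else ⊥

lemma vdeg_eq_sup_monomDeg (f : (α → ZMod 2) → ZMod 2) (I : Finset α) (w : ↥I → ZMod 2) :
    vdeg f I w = univ.sup (monomDeg f I w) := by
  have hcoeff (t : ↥Iᶜ → ZMod 2) : anf (coeffFun f I w) t = anf f (combine I w t) :=
    anf_sum_mul_monom (fun t => anf f (combine I w t)) t
  unfold monomDeg
  simp only [vdeg, deg, hcoeff, sup_ite, sup_bot, sup_bot_eq]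

variable {I₁ I₂ : Finset α}

def complEquivSdiffSumCompl (h : I₁ ⊆ I₂) : ↥I₁ᶜ ≃ ↥(I₂ \ I₁) ⊕ ↥I₂ᶜ where
  toFun j :=
    if hj : (j : α) ∈ I₂ then .inl ⟨j, mem_sdiff.2 ⟨hj, mem_compl.1 j.2⟩⟩
    else .inr ⟨j, mem_compl.2 hj⟩
  invFun := Sum.elim (fun j => ⟨j, mem_compl.2 (mem_sdiff.1 j.2).2⟩)
    (fun j => ⟨j, mem_compl.2 fun hj => mem_compl.1 j.2 (h hj)⟩)
  left_inv j := by by_cases hj : (j : α) ∈ I₂ <;> simp [hj]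
  right_inv := by
    rintro (j | j)
    · simp [(mem_sdiff.1 j.2).1]
    · simp [mem_compl.1 j.2]

lemma combine_sumElim_comp_complEquivSdiffSumCompl (h : I₁ ⊆ I₂) (w : ↥I₁ → ZMod 2)
    (w' : ↥(I₂ \ I₁) → ZMod 2) (s : ↥I₂ᶜ → ZMod 2) :
    combine I₁ w (Sum.elim w' s ∘ complEquivSdiffSumCompl h) = combine I₂ (joinFn w w') s := by
  funext i
  by_cases h₁ : i ∈ I₁
  · simp [combine, joinFn, h₁, h h₁]
  · by_cases h₂ : i ∈ I₂ <;> simp [combine, joinFn, complEquivSdiffSumCompl, h₁, h₂]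

lemma monomDeg_sumElim_comp_complEquivSdiffSumCompl (f : (α → ZMod 2) → ZMod 2)
    (h : I₁ ⊆ I₂) (w : ↥I₁ → ZMod 2) (w' : ↥(I₂ \ I₁) → ZMod 2) (s : ↥I₂ᶜ → ZMod 2) :
    monomDeg f I₁ w (Sum.elim w' s ∘ complEquivSdiffSumCompl h)
      = monomDeg f I₂ (joinFn w w') s + ((wt w' : ℤ) : WithBot ℤ) := by
  rw [monomDeg, monomDeg, combine_sumElim_comp_complEquivSdiffSumCompl, wt_comp_equiv,
    wt_sumElim]
  split_ifs
  · push_cast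
    rw [add_comm]
  · rfl

end VectorDegree

lemma WithBot.finset_sup_add {ι M : Type*} [AddCommMonoid M] [LinearOrder M]
    [IsOrderedAddMonoid M] (s : Finset ι) (g : ι → WithBot M) (c : WithBot M) :
    s.sup g + c = s.sup (fun i => g i + c) :=
  apply_sup_eq_sup_comp_of_linearOrder (· + c) (fun _ _ hab => by dsimp only; gcongr)
    (WithBot.bot_add c)

/-- For `I₁ ⊆ I₂`, the vector degree w.r.t. `I₁` is determined by the
vector degree w.r.t. `I₂`. -/
theorem vdeg_subset_eq {n : ℕ} (f : (Fin n → ZMod 2) → ZMod 2)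
    (I₁ I₂ : Finset (Fin n)) (h : I₁ ⊆ I₂) (w : ↥I₁ → ZMod 2) :
    vdeg f I₁ w = Finset.univ.sup
      (fun w' : ↥(I₂ \ I₁) → ZMod 2 =>
        vdeg f I₂ (joinFn w w') + ((wt w' : ℤ) : WithBot ℤ)) := by
  let e : (↥(I₂ \ I₁) → ZMod 2) × (↥I₂ᶜ → ZMod 2) ≃ (↥I₁ᶜ → ZMod 2) :=
    (Equiv.sumArrowEquivProdArrow _ _ _).symm.trans
      ((complEquivSdiffSumCompl h).symm.arrowCongr (.refl _))
  calc vdeg f I₁ w = univ.sup (monomDeg f I₁ w) := vdeg_eq_sup_monomDeg f I₁ w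
    _ = univ.sup (monomDeg f I₁ w ∘ e) := by
      rw [← map_univ_equiv e, sup_map]
      rfl
    _ = univ.sup fun w' => univ.sup fun s =>
          monomDeg f I₂ (joinFn w w') s + ((wt w' : ℤ) : WithBot ℤ) := by
      rw [← univ_product_univ, sup_product_left]
      exact sup_congr rfl fun w' _ => sup_congr rfl fun s _ =>
        monomDeg_sumElim_comp_complEquivSdiffSumCompl f h w w' s
    _ = _ := by simp only [vdeg_eq_sup_monomDeg, WithBot.finset_sup_add]
end

section
/- Let f be a Boolean function on n variables, I ⊆ {0,…,n-1}, and v : 𝔽₂^I → ℤ ∪ {-∞} an upper bound of the vector degree, i.e. vdeg_I(f) ≼ v. Then deg(f) ≤ max_{w ∈ 𝔽₂^I} ( min(v(w), n - |I|) + wt(w) ), computed in ℤ ∪ {-∞}. -/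
open Finset

lemma sum_monom {α : Type*} [Fintype α] [DecidableEq α] (u t : α → ZMod 2) :
    ∑ v ∈ Finset.univ.filter (fun v : α → ZMod 2 => ∀ i, v i = 1 → u i = 1), monom t v
      = if t = u then 1 else 0 := by
  have hset : Finset.univ.filter (fun v : α → ZMod 2 => ∀ i, v i = 1 → u i = 1)
      = Fintype.piFinset (fun i => if u i = 1 then (Finset.univ : Finset (ZMod 2)) else {0}) := by
    ext v
    simp only [Finset.mem_filter, Finset.mem_univ, true_and, Fintype.mem_piFinset]
    have key : ∀ a b : ZMod 2, (a ∈ (if b = 1 then (Finset.univ : Finset (ZMod 2)) else {0}) ↔ (a = 1 → b = 1)) := by decide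
    exact forall_congr' fun i => (key (v i) (u i)).symm
  rw [hset]
  have h2 := (Finset.prod_univ_sum (fun i => if u i = 1 then (Finset.univ : Finset (ZMod 2)) else {0})
    (fun i x => if t i = 1 then x else 1)).symm
  unfold monom
  rw [h2]
  have key : ∀ a b : ZMod 2,
      (∑ x ∈ (if b = 1 then (Finset.univ : Finset (ZMod 2)) else {0}), (if a = 1 then x else 1))
        = if a = b then 1 else 0 := by decide
  simp only [key]
  by_cases h : t = u
  · subst h; simp
  · rw [if_neg h]
    obtain ⟨i, hi⟩ : ∃ i, t i ≠ u i := by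
      by_contra hc; push_neg at hc; exact h (funext hc)
    exact Finset.prod_eq_zero (Finset.mem_univ i) (if_neg hi)

lemma anf_sum_s9 {α : Type*} [Fintype α] [DecidableEq α] (c : (α → ZMod 2) → ZMod 2) (u : α → ZMod 2) :
    anf (fun y => ∑ τ, c τ * monom τ y) u = c u := by
  unfold anf
  rw [Finset.sum_comm]
  simp only [← Finset.mul_sum, sum_monom]
  simp

/-- An upper bound of the vector degree yields an upper bound of the
algebraic degree. -/
theorem deg_le_of_vdeg_le {n : ℕ} (f : (Fin n → ZMod 2) → ZMod 2)
    (I : Finset (Fin n)) (v : (↥I → ZMod 2) → WithBot ℤ)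
    (hv : ∀ w, vdeg f I w ≤ v w) :
    deg f ≤ Finset.univ.sup (fun w : ↥I → ZMod 2 =>
      min (v w) (((n : ℤ) - (I.card : ℤ) : ℤ) : WithBot ℤ) + ((wt w : ℤ) : WithBot ℤ)) := by
  apply Finset.sup_le
  intro u hu
  have hanf : anf f u = 1 := (Finset.mem_filter.mp hu).2
  set w : ↥I → ZMod 2 := fun i => u i with hw
  set t : ↥Iᶜ → ZMod 2 := fun i => u i with ht
  have hcomb : combine I w t = u := by
    funext i; unfold combine; split <;> rfl
  have hanf' : anf (coeffFun f I w) t = 1 := by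
    unfold coeffFun
    rw [anf_sum_s9 (fun τ => anf f (combine I w τ)) t, hcomb]
    exact hanf
  have h1 : ((wt t : ℤ) : WithBot ℤ) ≤ v w := by
    refine le_trans ?_ (hv w)
    exact Finset.le_sup (f := fun u => ((wt u : ℤ) : WithBot ℤ))
      (Finset.mem_filter.mpr ⟨Finset.mem_univ _, hanf'⟩)
  have h2 : (wt t : ℤ) ≤ (n : ℤ) - (I.card : ℤ) := by
    have hb : wt t ≤ Iᶜ.card := by
      refine (Finset.card_filter_le _ _).trans ?_
      simp [Finset.card_univ]
    have hc : Iᶜ.card = n - I.card := by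
      simp [Finset.card_compl]
    have hI : I.card ≤ n := by
      simpa using Finset.card_le_univ I
    omega
  have hwI : wt w = (I.filter (fun i => u i = 1)).card := by
    unfold wt
    simp only [hw]
    rw [show (Finset.univ : Finset ↥I) = I.attach from rfl,
      Finset.filter_attach (fun i => u i = 1) I, Finset.card_map, Finset.card_attach]
  have htI : wt t = (Iᶜ.filter (fun i => u i = 1)).card := by
    unfold wt
    simp only [ht]
    rw [show (Finset.univ : Finset ↥Iᶜ) = Iᶜ.attach from rfl,
      Finset.filter_attach (fun i => u i = 1) Iᶜ, Finset.card_map, Finset.card_attach]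
  have hwt : wt u = wt w + wt t := by
    rw [hwI, htI]
    unfold wt
    rw [← Finset.card_union_of_disjoint
      (Finset.disjoint_filter_filter disjoint_compl_right),
      ← Finset.filter_union, Finset.union_compl]
  calc ((wt u : ℤ) : WithBot ℤ)
      ≤ min (v w) (((n : ℤ) - (I.card : ℤ) : ℤ) : WithBot ℤ) + ((wt w : ℤ) : WithBot ℤ) := by
        have : ((wt u : ℤ) : WithBot ℤ)
            = ((wt t : ℤ) : WithBot ℤ) + ((wt w : ℤ) : WithBot ℤ) := by
          rw [hwt, Nat.cast_add, WithBot.coe_add, add_comm]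
        rw [this]
        exact add_le_add (le_min h1 (WithBot.coe_le_coe.mpr h2)) le_rfl
    _ ≤ _ := Finset.le_sup (f := fun w : ↥I → ZMod 2 =>
        min (v w) (((n : ℤ) - (I.card : ℤ) : ℤ) : WithBot ℤ) + ((wt w : ℤ) : WithBot ℤ))
        (Finset.mem_univ w)
end

section
/- Let f be a Boolean function on n variables, let J₁ ⊆ J₂ be finite index sets with |J₁| = k and |J₂| = d, and identify 𝔽₂^{J₂} with 𝔽₂^{J₁} × 𝔽₂^{J₂∖J₁}, writing elements as pairs (w, w'). Suppose V₁ = (V₁[0],…,V₁[n-1]) with V₁[i] : 𝔽₂^{J₁} → ℤ ∪ {-∞}, and V₂ = (V₂[0],…,V₂[n-1]) with V₂[i] : 𝔽₂^{J₂} → ℤ ∪ {-∞}, satisfy V₁[i](w) ≥ max_{w' ∈ 𝔽₂^{J₂∖J₁}} ( V₂[i](w, w') + wt(w') ) for all 0 ≤ i ≤ n-1 and all w ∈ 𝔽₂^{J₁}. Then for all w ∈ 𝔽₂^{J₁}: VDEG_k(f, V₁)(w) ≥ max_{w' ∈ 𝔽₂^{J₂∖J₁}} ( VDEG_d(f, V₂)(w,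 w') + wt(w') ). -/
open Finset

/-! A witness `(u, (w_i)_i)` for `VDEG_d(f, V₂)(w, w')` splits each `w_i` into its parts on `J₁`
and on `J₂ ∖ J₁`. The parts on `J₁` form a witness for `VDEG_k(f, V₁)(w)`, while `w'` is the OR
of the parts on `J₂ ∖ J₁`, so `wt w'` is at most the sum of their weights. Distributing `wt w'`
over the sum in this way, the hypothesis on `V₁, V₂` absorbs it term by term. -/

theorem WithBot.finset_sup_add_le {ι α : Type*} [LinearOrder α] [Add α] {s : Finset ι}
    {g : ι → WithBot α} {c T : WithBot α} (hg : ∀ i ∈ s, g i + c ≤ T) : s.sup g + c ≤ T := by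
  rcases s.eq_empty_or_nonempty with rfl | hs
  · simp
  · obtain ⟨i, hi, hsup⟩ := s.exists_mem_eq_sup hs g
    exact hsup ▸ hg i hi

section JoinFn

variable {α : Type*} [DecidableEq α] {I₁ I₂ : Finset α}

theorem restrict₂_joinFn (h : I₁ ⊆ I₂) (w : ↥I₁ → ZMod 2) (w' : ↥(I₂ \ I₁) → ZMod 2) :
    Finset.restrict₂ (π := fun _ => ZMod 2) h (joinFn w w') = w := by
  funext j
  simp [Finset.restrict₂, joinFn, j.2]

theorem restrict₂_sdiff_joinFn (w : ↥I₁ → ZMod 2) (w' : ↥(I₂ \ I₁) → ZMod 2) :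
    Finset.restrict₂ (π := fun _ => ZMod 2) sdiff_subset (joinFn w w') = w' := by
  funext j
  simp [Finset.restrict₂, joinFn, (mem_sdiff.mp j.2).2]

theorem joinFn_restrict₂ (h : I₁ ⊆ I₂) (v : ↥I₂ → ZMod 2) :
    joinFn (Finset.restrict₂ (π := fun _ => ZMod 2) h v)
      (Finset.restrict₂ (π := fun _ => ZMod 2) sdiff_subset v) = v := by
  funext j
  unfold joinFn
  split <;> rfl

end JoinFn

section OrFam

variable {n : ℕ} {β : Type*}

theorem restrict₂_orFam {s t : Finset β} (h : s ⊆ t) (u : Fin n → ZMod 2)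
    (W : Fin n → ↥t → ZMod 2) :
    Finset.restrict₂ (π := fun _ => ZMod 2) h (orFam u W) =
      orFam u (fun i => Finset.restrict₂ (π := fun _ => ZMod 2) h (W i)) :=
  rfl

theorem wt_orFam_le [Fintype β] (u : Fin n → ZMod 2) (W : Fin n → β → ZMod 2) :
    wt (orFam u W) ≤ ∑ i ∈ univ.filter (fun i => u i = 1), wt (W i) := by
  classical
  have hsupp : univ.filter (fun j => orFam u W j = 1) ⊆
      (univ.filter (fun i => u i = 1)).biUnion (fun i => univ.filter (fun j => W i j = 1)) := by
    intro j hj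
    by_cases hex : ∃ i, u i = 1 ∧ W i j = 1
    · simpa using hex
    · simp [orFam, hex] at hj
  exact (card_le_card hsupp).trans card_biUnion_le

end OrFam

section VDEG

variable {n : ℕ} {δ : Type*} [Fintype δ] [DecidableEq δ]
  (f : (Fin n → ZMod 2) → ZMod 2) (V : Fin n → (δ → ZMod 2) → WithBot ℤ)

theorem sum_le_VDEG {u : Fin n → ZMod 2} {W : Fin n → δ → ZMod 2} (hu : anf f u = 1)
    (hW : ∀ i, u i = 0 → W i = 0) :
    ∑ i ∈ univ.filter (fun i => u i = 1), V i (W i) ≤ VDEG f V (orFam u W) :=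
  le_sup (f := fun p : (Fin n → ZMod 2) × (Fin n → δ → ZMod 2) =>
      ∑ i ∈ univ.filter (fun i => p.1 i = 1), V i (p.2 i)) (b := (u, W))
    (mem_filter.mpr ⟨mem_univ _, hu, hW, rfl⟩)

theorem VDEG_add_le {w : δ → ZMod 2} {c T : WithBot ℤ}
    (hle : ∀ u W, anf f u = 1 → (∀ i, u i = 0 → W i = 0) → w = orFam u W →
      ∑ i ∈ univ.filter (fun i => u i = 1), V i (W i) + c ≤ T) :
    VDEG f V w + c ≤ T :=
  WithBot.finset_sup_add_le fun p hp => by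
    simp only [mem_filter, mem_univ, true_and] at hp
    exact hle p.1 p.2 hp.1 hp.2.1 hp.2.2

end VDEG

theorem VDEG_subset_general {n : ℕ} {γ : Type*} [DecidableEq γ]
    (f : (Fin n → ZMod 2) → ZMod 2) (J₁ J₂ : Finset γ) (h : J₁ ⊆ J₂)
    (V₁ : Fin n → (↥J₁ → ZMod 2) → WithBot ℤ)
    (V₂ : Fin n → (↥J₂ → ZMod 2) → WithBot ℤ)
    (hyp : ∀ i (w : ↥J₁ → ZMod 2),
      Finset.univ.sup (fun w' : ↥(J₂ \ J₁) → ZMod 2 =>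
        V₂ i (joinFn w w') + ((wt w' : ℤ) : WithBot ℤ)) ≤ V₁ i w)
    (w : ↥J₁ → ZMod 2) :
    Finset.univ.sup (fun w' : ↥(J₂ \ J₁) → ZMod 2 =>
      VDEG f V₂ (joinFn w w') + ((wt w' : ℤ) : WithBot ℤ)) ≤ VDEG f V₁ w := by
  refine Finset.sup_le fun w' _ => VDEG_add_le f V₂ fun u W hu hW hw => ?_
  set W₁ := fun i => Finset.restrict₂ (π := fun _ => ZMod 2) h (W i)
  set W' := fun i => Finset.restrict₂ (π := fun _ => ZMod 2) sdiff_subset (W i)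
  have hw₁ : orFam u W₁ = w := by
    rw [← restrict₂_orFam, ← hw, restrict₂_joinFn]
  have hw' : orFam u W' = w' := by
    rw [← restrict₂_orFam, ← hw, restrict₂_sdiff_joinFn]
  have hW₁ : ∀ i, u i = 0 → W₁ i = 0 := fun i hi => by
    simp only [W₁, hW i hi]; rfl
  calc ∑ i ∈ univ.filter (fun i => u i = 1), V₂ i (W i) + ((wt w' : ℤ) : WithBot ℤ)
      ≤ ∑ i ∈ univ.filter (fun i => u i = 1),
          (V₂ i (W i) + ((wt (W' i) : ℤ) : WithBot ℤ)) := by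
        rw [sum_add_distrib]
        gcongr
        rw [← hw']
        exact_mod_cast wt_orFam_le u W'
    _ ≤ ∑ i ∈ univ.filter (fun i => u i = 1), V₁ i (W₁ i) := by
        gcongr with i
        refine le_trans ?_ (hyp i (W₁ i))
        rw [← joinFn_restrict₂ h (W i)]
        exact le_sup (f := fun v => V₂ i (joinFn (W₁ i) v) + ((wt v : ℤ) : WithBot ℤ))
          (mem_univ (W' i))
    _ ≤ VDEG f V₁ w := hw₁ ▸ sum_le_VDEG f V₁ hu hW₁

/-- Compatibility of the vector numeric mapping with shrinking the
index set from `J₂` to `J₁ ⊆ J₂`. -/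
theorem VDEG_subset {n : ℕ} {γ : Type*} [Fintype γ] [DecidableEq γ]
    (f : (Fin n → ZMod 2) → ZMod 2) (J₁ J₂ : Finset γ) (h : J₁ ⊆ J₂)
    (V₁ : Fin n → (↥J₁ → ZMod 2) → WithBot ℤ)
    (V₂ : Fin n → (↥J₂ → ZMod 2) → WithBot ℤ)
    (hyp : ∀ i (w : ↥J₁ → ZMod 2),
      Finset.univ.sup (fun w' : ↥(J₂ \ J₁) → ZMod 2 =>
        V₂ i (joinFn w w') + ((wt w' : ℤ) : WithBot ℤ)) ≤ V₁ i w)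
    (w : ↥J₁ → ZMod 2) :
    Finset.univ.sup (fun w' : ↥(J₂ \ J₁) → ZMod 2 =>
      VDEG f V₂ (joinFn w w') + ((wt w' : ℤ) : WithBot ℤ)) ≤ VDEG f V₁ w :=
  VDEG_subset_general f J₁ J₂ h V₁ V₂ hyp w
end
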